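/- Let 𝕊 = [[A, B],[C, D]] be a 2×2 block operator on H₁ ⊕ H₂. Then w(𝕊) ≤ (1/2)(w(A) + w(D)) + (1/2)√((w(A) - w(D))² + 4 w(𝕋)²), where 𝕋 = [[0, B],[C, 0]]. -/

import Mathlib

open ContinuousLinearMap in
/-- The numerical radius `w(T) = sup { |⟨Tx,x⟩| : ‖x‖ = 1 }`. -/
noncomputable def numRad {H : Type*} [NormedAddCommGroup H] [InnerProductSpace ℂ H]
    (T : H →L[ℂ] H) : ℝ :=
  sSup {r : ℝ | ∃ x : H, ‖x‖ = 1 ∧ r = ‖(inner ℂ (T x) x : ℂ)‖}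

/-!
For a unit vector `z = (x, y)` write `a = ‖x‖`, `b = ‖y‖`. Splitting `⟪𝕊z, z⟫` into its diagonal
terms and the off-diagonal term `⟪𝕋z, z⟫` gives `|⟪𝕊z, z⟫| ≤ w(A) a² + w(D) b² + 2 w(𝕋) a b`; the
bound `|⟪𝕋z, z⟫| ≤ 2 w(𝕋) a b` comes from evaluating `𝕋` at `(b x, a y)`, which rescales the
off-diagonal term by `a b` but its squared norm to `2 a² b²`. The bound obtained is the quadratic
form of `[[w(A), w(𝕋)], [w(𝕋), w(D)]]` at the unit vector `(a, b)`, so it is bounded by the larger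
eigenvalue of that matrix.
-/

lemma quadratic_form_le_of_sq_add_sq_eq_one {α β γ a b : ℝ} (hab : a ^ 2 + b ^ 2 = 1) :
    α * a ^ 2 + β * b ^ 2 + 2 * γ * (a * b) ≤
      1 / 2 * (α + β) + 1 / 2 * √((α - β) ^ 2 + 4 * γ ^ 2) := by
  -- Cauchy–Schwarz for `(α - β, 2γ)` and `(a² - b², 2ab)`, the latter being a unit vector.
  have hunit : (a ^ 2 - b ^ 2) ^ 2 + (2 * (a * b)) ^ 2 = 1 := by
    linear_combination (a ^ 2 + b ^ 2 + 1) * hab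
  have hP : (α - β) * (a ^ 2 - b ^ 2) + 2 * γ * (2 * (a * b)) ≤ √((α - β) ^ 2 + 4 * γ ^ 2) :=
    (le_abs_self _).trans <| Real.abs_le_sqrt <| by
      nlinarith [sq_nonneg ((α - β) * (2 * (a * b)) - 2 * γ * (a ^ 2 - b ^ 2))]
  have hsplit : α * a ^ 2 + β * b ^ 2 + 2 * γ * (a * b) = 1 / 2 * (α + β) * (a ^ 2 + b ^ 2) +
      1 / 2 * ((α - β) * (a ^ 2 - b ^ 2) + 2 * γ * (2 * (a * b))) := by ring
  rw [hsplit, hab]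
  linarith

section NumRad

variable {H : Type*} [NormedAddCommGroup H] [InnerProductSpace ℂ H]

lemma numRad_nonneg (T : H →L[ℂ] H) : 0 ≤ numRad T :=
  Real.sSup_nonneg (by rintro r ⟨x, -, rfl⟩; positivity)

lemma numRad_le {T : H →L[ℂ] H} {c : ℝ} (hc : 0 ≤ c)
    (h : ∀ x : H, ‖x‖ = 1 → ‖(inner ℂ (T x) x : ℂ)‖ ≤ c) : numRad T ≤ c :=
  Real.sSup_le (by rintro r ⟨x, hx, rfl⟩; exact h x hx) hc

lemma norm_inner_le_numRad (T : H →L[ℂ] H) {x : H} (hx : ‖x‖ = 1) :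
    ‖(inner ℂ (T x) x : ℂ)‖ ≤ numRad T := by
  refine le_csSup ⟨‖T‖, ?_⟩ ⟨x, hx, rfl⟩
  rintro r ⟨y, hy, rfl⟩
  calc ‖(inner ℂ (T y) y : ℂ)‖ ≤ ‖T y‖ * ‖y‖ := norm_inner_le_norm _ _
    _ ≤ ‖T‖ := by simpa [hy] using T.le_opNorm y

lemma norm_inner_le_numRad_mul_sq (T : H →L[ℂ] H) (x : H) :
    ‖(inner ℂ (T x) x : ℂ)‖ ≤ numRad T * ‖x‖ ^ 2 := by
  rcases eq_or_ne x 0 with rfl | hx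
  · simp
  have hx' : 0 < ‖x‖ := norm_pos_iff.mpr hx
  set u : H := ((‖x‖⁻¹ : ℝ) : ℂ) • x
  have hu : ‖u‖ = 1 := by simp [u, norm_smul, hx'.ne']
  have hTu : ‖(inner ℂ (T u) u : ℂ)‖ = ‖(inner ℂ (T x) x : ℂ)‖ / ‖x‖ ^ 2 := by
    simp only [u, map_smul, inner_smul_left, inner_smul_right, Complex.conj_ofReal, norm_mul,
      Complex.norm_real, norm_inv, norm_norm]
    field_simp
  rw [← div_le_iff₀ (by positivity), ← hTu]
  exact norm_inner_le_numRad T hu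

end NumRad

section BlockOperator

variable {H₁ H₂ : Type*} [NormedAddCommGroup H₁] [InnerProductSpace ℂ H₁]
  [NormedAddCommGroup H₂] [InnerProductSpace ℂ H₂]
  {A : H₁ →L[ℂ] H₁} {D : H₂ →L[ℂ] H₂} {B : H₂ →L[ℂ] H₁} {C : H₁ →L[ℂ] H₂}
  {S T : WithLp 2 (H₁ × H₂) →L[ℂ] WithLp 2 (H₁ × H₂)}

lemma inner_block_apply
    (hS : ∀ x y, S (WithLp.toLp 2 (x, y)) = WithLp.toLp 2 (A x + B y, C x + D y))
    (x : H₁) (y : H₂) :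
    (inner ℂ (S (WithLp.toLp 2 (x, y))) (WithLp.toLp 2 (x, y)) : ℂ) =
      inner ℂ (A x) x + (inner ℂ (B y) x + inner ℂ (C x) y) + inner ℂ (D y) y := by
  rw [hS, WithLp.prod_inner_apply]
  simp only [inner_add_left]
  ring

lemma inner_offDiag_apply (hT : ∀ x y, T (WithLp.toLp 2 (x, y)) = WithLp.toLp 2 (B y, C x))
    (x : H₁) (y : H₂) :
    (inner ℂ (T (WithLp.toLp 2 (x, y))) (WithLp.toLp 2 (x, y)) : ℂ) =
      inner ℂ (B y) x + inner ℂ (C x) y := by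
  rw [hT, WithLp.prod_inner_apply]

lemma norm_inner_offDiag_le (hT : ∀ x y, T (WithLp.toLp 2 (x, y)) = WithLp.toLp 2 (B y, C x))
    (x : H₁) (y : H₂) :
    ‖(inner ℂ (B y) x + inner ℂ (C x) y : ℂ)‖ ≤ 2 * numRad T * (‖x‖ * ‖y‖) := by
  rcases eq_or_ne x 0 with rfl | hx
  · simp
  rcases eq_or_ne y 0 with rfl | hy
  · simp
  set a := ‖x‖
  set b := ‖y‖
  have hab : 0 < a * b := mul_pos (norm_pos_iff.mpr hx) (norm_pos_iff.mpr hy)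
  have hscaled : (inner ℂ (T (WithLp.toLp 2 ((b : ℂ) • x, (a : ℂ) • y)))
      (WithLp.toLp 2 ((b : ℂ) • x, (a : ℂ) • y)) : ℂ) =
        ((a * b : ℝ) : ℂ) * (inner ℂ (B y) x + inner ℂ (C x) y) := by
    simp only [inner_offDiag_apply hT, map_smul, inner_smul_left, inner_smul_right,
      Complex.conj_ofReal]
    push_cast
    ring
  have hnorm : ‖WithLp.toLp 2 ((b : ℂ) • x, (a : ℂ) • y)‖ ^ 2 = 2 * (a * b) ^ 2 := by
    rw [WithLp.prod_norm_sq_eq_of_L2]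
    simp [norm_smul, a, b]
    ring
  have := norm_inner_le_numRad_mul_sq T (WithLp.toLp 2 ((b : ℂ) • x, (a : ℂ) • y))
  rw [hscaled, hnorm, norm_mul, Complex.norm_real, Real.norm_of_nonneg hab.le] at this
  nlinarith

end BlockOperator

theorem stmt16_general {H₁ H₂ : Type*} [NormedAddCommGroup H₁] [InnerProductSpace ℂ H₁]
    [NormedAddCommGroup H₂] [InnerProductSpace ℂ H₂]
    (A : H₁ →L[ℂ] H₁) (D : H₂ →L[ℂ] H₂) (B : H₂ →L[ℂ] H₁) (C : H₁ →L[ℂ] H₂)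
    (S T : WithLp 2 (H₁ × H₂) →L[ℂ] WithLp 2 (H₁ × H₂))
    (hS : ∀ x : H₁, ∀ y : H₂,
      S ((WithLp.equiv 2 (H₁ × H₂)).symm (x, y)) =
        (WithLp.equiv 2 (H₁ × H₂)).symm (A x + B y, C x + D y))
    (hT : ∀ x : H₁, ∀ y : H₂,
      T ((WithLp.equiv 2 (H₁ × H₂)).symm (x, y)) = (WithLp.equiv 2 (H₁ × H₂)).symm (B y, C x)) :
    numRad S ≤
      (1 / 2) * (numRad A + numRad D) +
        (1 / 2) * Real.sqrt ((numRad A - numRad D) ^ 2 + 4 * numRad T ^ 2) := by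
  have hA := numRad_nonneg A
  have hD := numRad_nonneg D
  refine numRad_le (by positivity) fun z hz => ?_
  simp only [WithLp.equiv_symm_apply] at hS hT
  obtain ⟨x, y⟩ := z
  have hxy : ‖x‖ ^ 2 + ‖y‖ ^ 2 = 1 := by
    simpa [hz] using (WithLp.prod_norm_sq_eq_of_L2 (WithLp.toLp 2 (x, y))).symm
  rw [inner_block_apply hS]
  calc _ ≤ numRad A * ‖x‖ ^ 2 + numRad D * ‖y‖ ^ 2 + 2 * numRad T * (‖x‖ * ‖y‖) := by
        have := norm_inner_le_numRad_mul_sq A x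
        have := norm_inner_le_numRad_mul_sq D y
        have := norm_inner_offDiag_le hT x y
        refine (norm_add₃_le ..).trans ?_
        linarith
    _ ≤ _ := quadratic_form_le_of_sq_add_sq_eq_one hxy

theorem stmt16 {H₁ H₂ : Type*} [NormedAddCommGroup H₁] [InnerProductSpace ℂ H₁] [CompleteSpace H₁]
    [NormedAddCommGroup H₂] [InnerProductSpace ℂ H₂] [CompleteSpace H₂]
    (A : H₁ →L[ℂ] H₁) (D : H₂ →L[ℂ] H₂) (B : H₂ →L[ℂ] H₁) (C : H₁ →L[ℂ] H₂)
    (S T : WithLp 2 (H₁ × H₂) →L[ℂ] WithLp 2 (H₁ × H₂))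
    (hS : ∀ x : H₁, ∀ y : H₂,
      S ((WithLp.equiv 2 (H₁ × H₂)).symm (x, y)) =
        (WithLp.equiv 2 (H₁ × H₂)).symm (A x + B y, C x + D y))
    (hT : ∀ x : H₁, ∀ y : H₂,
      T ((WithLp.equiv 2 (H₁ × H₂)).symm (x, y)) = (WithLp.equiv 2 (H₁ × H₂)).symm (B y, C x)) :
    numRad S ≤
      (1 / 2) * (numRad A + numRad D) +
        (1 / 2) * Real.sqrt ((numRad A - numRad D) ^ 2 + 4 * numRad T ^ 2) :=
  stmt16_general A D B C S T hS hT
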